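/- Let γ, κ > 0 and C_b > 1 be real numbers, and consider the cubic polynomial p(λ) = λ³ + (3γ + κ)λ² + (2γ²C_b + 2γκ)λ + 4κγ²(C_b − 1) over ℂ. Then every complex root of p has strictly negative real part if and only if 2γ²C_b(3γ − κ) + 2γκ² + 10γ²κ > 0, which holds if and only if κ ≤ 3γ, or κ > 3γ and κ² + 5κγ > γ(κ − 3γ)C_b. -/
import Mathlib

/-- A monic cubic with positive coefficients has a negative real root. -/
lemma exists_neg_root_aux (a b c : ℝ) (ha : 0 < a) (hb : 0 < b) (hc : 0 < c) :
    ∃ r : ℝ, r < 0 ∧ r ^ 3 + a * r ^ 2 + b * r + c = 0 := by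
  set f : ℝ → ℝ := fun x => x ^ 3 + a * x ^ 2 + b * x + c with hf
  have hcont : ContinuousOn f (Set.Icc (-(a + b + c + 1)) 0) := by
    apply Continuous.continuousOn; fun_prop
  have hle : -(a + b + c + 1) ≤ (0 : ℝ) := by linarith
  have hfneg : f (-(a + b + c + 1)) < 0 := by
    have hM : (1 : ℝ) ≤ a + b + c + 1 := by linarith
    simp only [hf]
    nlinarith [sq_nonneg (a + b + c + 1), mul_pos hb (show (0:ℝ) < a + b + c + 1 by linarith),
      mul_le_mul_of_nonneg_left hM (sq_nonneg (a + b + c + 1))]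
  have hf0 : f 0 = c := by simp [hf]
  have hmem : (0 : ℝ) ∈ Set.Icc (f (-(a + b + c + 1))) (f 0) := by
    constructor
    · linarith
    · rw [hf0]; linarith
  obtain ⟨r, hrI, hfr⟩ := intermediate_value_Icc hle hcont hmem
  refine ⟨r, ?_, hfr⟩
  rcases lt_or_eq_of_le hrI.2 with h | h
  · exact h
  · exfalso
    rw [h] at hfr
    rw [hf0] at hfr
    linarith

/-- Routh–Hurwitz criterion for monic cubics with positive coefficients. -/
lemma cubic_hurwitz (a b c : ℝ) (ha : 0 < a) (hb : 0 < b) (hc : 0 < c) :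
    (∀ z : ℂ, z ^ 3 + ((a : ℝ) : ℂ) * z ^ 2 + ((b : ℝ) : ℂ) * z + ((c : ℝ) : ℂ) = 0 →
      z.re < 0) ↔ c < a * b := by
  obtain ⟨r, hr0, hr⟩ := exists_neg_root_aux a b c ha hb hc
  have hrC : (r : ℂ) ^ 3 + (a : ℂ) * (r : ℂ) ^ 2 + (b : ℂ) * (r : ℂ) + (c : ℂ) = 0 := by
    exact_mod_cast congrArg (fun x : ℝ => (x : ℂ)) hr
  have hfac : ∀ z : ℂ, z ^ 3 + (a : ℂ) * z ^ 2 + (b : ℂ) * z + (c : ℂ) =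
      (z - (r : ℂ)) * (z ^ 2 + ((a + r : ℝ) : ℂ) * z + ((b + a * r + r ^ 2 : ℝ) : ℂ)) := by
    intro z
    push_cast
    linear_combination hrC
  have hkey : a * b - c = (a + r) * (b + r ^ 2) := by linear_combination -hr
  constructor
  · intro H
    -- it suffices to show 0 < a + r
    suffices hu : 0 < a + r by nlinarith [sq_nonneg r]
    set u : ℝ := a + r with hu'
    set v : ℝ := b + a * r + r ^ 2 with hv'
    by_cases hD : u ^ 2 - 4 * v < 0
    · -- complex conjugate pair, root (-u + i s)/2
      set s : ℝ := Real.sqrt (4 * v - u ^ 2) with hs'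
      have hs : s ^ 2 = 4 * v - u ^ 2 := Real.sq_sqrt (by linarith)
      have hsC : ((s : ℝ) : ℂ) ^ 2 = 4 * ((v : ℝ) : ℂ) - ((u : ℝ) : ℂ) ^ 2 := by
        exact_mod_cast congrArg (fun x : ℝ => (x : ℂ)) hs
      set z : ℂ := ((-u / 2 : ℝ) : ℂ) + ((s / 2 : ℝ) : ℂ) * Complex.I with hz'
      have hquad : z ^ 2 + ((u : ℝ) : ℂ) * z + ((v : ℝ) : ℂ) = 0 := by
        rw [hz']
        push_cast
        linear_combination (((s : ℝ) : ℂ) ^ 2 / 4) * Complex.I_sq + (-(1 : ℂ) / 4) * hsC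
      have hroot : z ^ 3 + ((a : ℝ) : ℂ) * z ^ 2 + ((b : ℝ) : ℂ) * z + ((c : ℝ) : ℂ) = 0 := by
        rw [hfac z, hquad, mul_zero]
      have := H z hroot
      have hre : z.re = -u / 2 := by
        simp [hz']
      rw [hre] at this
      linarith
    · -- two real roots of the quadratic
      push_neg at hD
      set s : ℝ := Real.sqrt (u ^ 2 - 4 * v) with hs'
      have hs : s ^ 2 = u ^ 2 - 4 * v := Real.sq_sqrt (by linarith)
      have hsnn : 0 ≤ s := Real.sqrt_nonneg _
      set x : ℝ := (-u + s) / 2 with hx'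
      have hquadx : x ^ 2 + u * x + v = 0 := by
        rw [hx']; nlinarith [hs]
      have hquad : ((x : ℝ) : ℂ) ^ 2 + ((u : ℝ) : ℂ) * ((x : ℝ) : ℂ) + ((v : ℝ) : ℂ) = 0 := by
        exact_mod_cast congrArg (fun t : ℝ => (t : ℂ)) hquadx
      have hroot : ((x : ℝ) : ℂ) ^ 3 + ((a : ℝ) : ℂ) * ((x : ℝ) : ℂ) ^ 2 +
          ((b : ℝ) : ℂ) * ((x : ℝ) : ℂ) + ((c : ℝ) : ℂ) = 0 := by
        rw [hfac ((x : ℝ) : ℂ), hquad, mul_zero]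
      have hxneg := H ((x : ℝ) : ℂ) hroot
      rw [Complex.ofReal_re] at hxneg
      -- x < 0 means s < u, hence u > 0
      have : s < u := by rw [hx'] at hxneg; linarith
      linarith
  · intro hab z hz
    rw [hfac z] at hz
    rcases mul_eq_zero.mp hz with h | h
    · have : z = (r : ℂ) := sub_eq_zero.mp h
      rw [this, Complex.ofReal_re]
      exact hr0
    · have hu : 0 < a + r := by nlinarith [sq_nonneg r]
      have hcv : c = -r * (b + a * r + r ^ 2) := by linear_combination hr
      have hv : 0 < b + a * r + r ^ 2 := by nlinarith
      -- extract real and imaginary parts of the quadratic equation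
      obtain ⟨hre, him⟩ := Complex.ext_iff.mp h
      simp only [Complex.add_re, Complex.add_im, Complex.mul_re, Complex.mul_im,
        Complex.ofReal_re, Complex.ofReal_im, Complex.zero_re, Complex.zero_im,
        pow_two, Complex.mul_re, Complex.mul_im] at hre him
      by_contra hx0
      push_neg at hx0
      have hy2 : z.im * (2 * z.re + (a + r)) = 0 := by linarith
      rcases mul_eq_zero.mp hy2 with hy | hx2
      · rw [hy] at hre
        nlinarith
      · linarith

theorem cubic_roots_negative_real_part_iff
    (γ κ Cb : ℝ) (hγ : 0 < γ) (hκ : 0 < κ) (hCb : 1 < Cb) :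
    ((∀ z : ℂ,
        z ^ 3 + ((3 * γ + κ : ℝ) : ℂ) * z ^ 2 + ((2 * γ ^ 2 * Cb + 2 * γ * κ : ℝ) : ℂ) * z +
            ((4 * κ * γ ^ 2 * (Cb - 1) : ℝ) : ℂ) = 0 →
          z.re < 0) ↔
      0 < 2 * γ ^ 2 * Cb * (3 * γ - κ) + 2 * γ * κ ^ 2 + 10 * γ ^ 2 * κ) ∧
    (0 < 2 * γ ^ 2 * Cb * (3 * γ - κ) + 2 * γ * κ ^ 2 + 10 * γ ^ 2 * κ ↔
      (κ ≤ 3 * γ ∨ (3 * γ < κ ∧ γ * (κ - 3 * γ) * Cb < κ ^ 2 + 5 * κ * γ))) := by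
  have ha : 0 < 3 * γ + κ := by linarith
  have hb : 0 < 2 * γ ^ 2 * Cb + 2 * γ * κ := by nlinarith
  have hc : 0 < 4 * κ * γ ^ 2 * (Cb - 1) := by
    nlinarith [mul_pos (mul_pos hκ (mul_pos hγ hγ)) (show (0:ℝ) < Cb - 1 by linarith)]
  constructor
  · rw [cubic_hurwitz _ _ _ ha hb hc]
    constructor
    · intro h; nlinarith
    · intro h; nlinarith
  · constructor
    · intro h
      rcases le_or_gt κ (3 * γ) with hk | hk
      · exact Or.inl hk
      · exact Or.inr ⟨hk, by nlinarith⟩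
    · rintro (hk | ⟨hk, hk2⟩)
      · nlinarith [mul_nonneg (mul_nonneg (sq_nonneg γ) (show (0:ℝ) ≤ Cb by linarith))
          (show (0:ℝ) ≤ 3 * γ - κ by linarith), mul_pos hγ (mul_pos hκ hκ),
          mul_pos (mul_pos hγ hγ) hκ]
      · nlinarith
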